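/- Let G be a connected strongly C4-free graph with |V(G)| ≥ 2 and no vertices of degree 0. Then gap(G) = max{0, max_{v ∈ V(G)} (gap(G(v)) − 1)}, where G(v) is G with vertex v removed. -/
import Mathlib


structure LoopGraph (V : Type*) where
  Adj : V → V → Prop
  symm : ∀ u v, Adj u v → Adj v u

namespace LoopGraph

variable {V : Type*} [Fintype V] [DecidableEq V]

/-- `C` is a set-join cover of `G`: a finite family of set-joins `K ∨ L`
(with `K`, `L` nonempty) whose edge sets union to `E(G)`. -/
def IsCover (G : LoopGraph V) (C : Finset (Finset V × Finset V)) : Prop :=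
  (∀ p ∈ C, p.1.Nonempty ∧ p.2.Nonempty) ∧
  (∀ u v : V, G.Adj u v ↔ ∃ p ∈ C, (u ∈ p.1 ∧ v ∈ p.2) ∨ (u ∈ p.2 ∧ v ∈ p.1))

/-- The component set of a set-join cover: all sets occurring as a part. -/
def sjComponents (C : Finset (Finset V × Finset V)) : Finset (Finset V) :=
  C.image Prod.fst ∪ C.image Prod.snd

/-- The SNT-rank: minimal number of distinct components over all set-join covers. -/
noncomputable def stp (G : LoopGraph V) : ℕ :=
  sInf {n | ∃ C : Finset (Finset V × Finset V), G.IsCover C ∧ (sjComponents C).card = n}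

/-- `gap G = |V(G)| - stp G`. -/
noncomputable def gap (G : LoopGraph V) : ℕ :=
  Fintype.card V - G.stp

/-- No vertices `u₁ ≠ u₂`, `v₁ ≠ v₂` with all four pairs `{uᵢ, vⱼ}` edges. -/
def StronglyC4Free (G : LoopGraph V) : Prop :=
  ¬ ∃ u₁ u₂ v₁ v₂ : V, u₁ ≠ u₂ ∧ v₁ ≠ v₂ ∧
    G.Adj u₁ v₁ ∧ G.Adj u₁ v₂ ∧ G.Adj u₂ v₁ ∧ G.Adj u₂ v₂

/-- Induced subgraph on a finset of vertices. -/
def induce (G : LoopGraph V) (s : Finset V) : LoopGraph {x // x ∈ s} :=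
  ⟨fun a b => G.Adj a b, fun _ _ h => G.symm _ _ h⟩

/-- Degree of a vertex; a loop counts twice. -/
noncomputable def deg (G : LoopGraph V) (x : V) : ℕ :=
  {y | G.Adj x y}.ncard + {y | y = x ∧ G.Adj x y}.ncard

end LoopGraph

set_option linter.unusedSectionVars false

namespace LoopGraph

variable {V : Type*} [Fintype V] [DecidableEq V]

lemma cover_adj {G : LoopGraph V} {C : Finset (Finset V × Finset V)} (h : G.IsCover C)
    {p : Finset V × Finset V} (hp : p ∈ C) {u v : V} (hu : u ∈ p.1) (hv : v ∈ p.2) :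
    G.Adj u v :=
  (h.2 u v).2 ⟨p, hp, Or.inl ⟨hu, hv⟩⟩

lemma exists_cover (G : LoopGraph V) : ∃ C, G.IsCover C := by
  classical
  refine ⟨((Finset.univ ×ˢ Finset.univ).filter fun q : V × V => G.Adj q.1 q.2).image
      (fun q => (({q.1} : Finset V), ({q.2} : Finset V))), ?_, ?_⟩
  · intro p hp
    simp only [Finset.mem_image] at hp
    obtain ⟨q, -, rfl⟩ := hp
    exact ⟨⟨q.1, Finset.mem_singleton_self _⟩, ⟨q.2, Finset.mem_singleton_self _⟩⟩
  · intro u v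
    constructor
    · intro h
      refine ⟨({u}, {v}), ?_, Or.inl ⟨Finset.mem_singleton_self _, Finset.mem_singleton_self _⟩⟩
      refine Finset.mem_image_of_mem
        (fun q : V × V => (({q.1} : Finset V), ({q.2} : Finset V))) (a := (u, v)) ?_
      rw [Finset.mem_filter, Finset.mem_product]
      exact ⟨⟨Finset.mem_univ _, Finset.mem_univ _⟩, h⟩
    · rintro ⟨p, hp, hcase⟩
      simp only [Finset.mem_image, Finset.mem_filter] at hp
      obtain ⟨q, ⟨-, hq⟩, rfl⟩ := hp
      rcases hcase with ⟨hu, hv⟩ | ⟨hu, hv⟩ <;>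
        simp only [Finset.mem_singleton] at hu hv <;> subst hu <;> subst hv
      · exact hq
      · exact G.symm _ _ hq

lemma stp_spec (G : LoopGraph V) :
    ∃ C, G.IsCover C ∧ (sjComponents C).card = G.stp := by
  obtain ⟨C, hC⟩ := exists_cover G
  have hne : {n | ∃ C, G.IsCover C ∧ (sjComponents C).card = n}.Nonempty := ⟨_, C, hC, rfl⟩
  exact Nat.sInf_mem hne

lemma stp_le (G : LoopGraph V) {C} (h : G.IsCover C) : G.stp ≤ (sjComponents C).card :=
  Nat.sInf_le ⟨C, h, rfl⟩

lemma mem_sjComponents {C : Finset (Finset V × Finset V)} {X : Finset V} :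
    X ∈ sjComponents C ↔ ∃ p ∈ C, p.1 = X ∨ p.2 = X := by
  simp only [sjComponents, Finset.mem_union, Finset.mem_image]
  constructor
  · rintro (⟨p, hp, rfl⟩ | ⟨p, hp, rfl⟩)
    · exact ⟨p, hp, Or.inl rfl⟩
    · exact ⟨p, hp, Or.inr rfl⟩
  · rintro ⟨p, hp, rfl | rfl⟩
    · exact Or.inl ⟨p, hp, rfl⟩
    · exact Or.inr ⟨p, hp, rfl⟩

lemma exists_adj_of_deg {G : LoopGraph V} {v : V} (h : G.deg v ≠ 0) :
    ∃ w, G.Adj v w := by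
  by_contra hc
  push_neg at hc
  apply h
  have h1 : {y | G.Adj v y} = ∅ := Set.eq_empty_iff_forall_notMem.2 hc
  have h2 : {y | y = v ∧ G.Adj v y} = ∅ :=
    Set.eq_empty_iff_forall_notMem.2 (fun y hy => hc y hy.2)
  simp [deg, h1, h2]

end LoopGraph

open LoopGraph

/-- For a connected strongly C4-free graph `G` with at least two
vertices and no vertices of degree 0,
`gap G = max {0, max_v (gap (G(v)) − 1)}` (the truncated ℕ-subtraction realizes
the outer max with 0). -/
theorem stmt_12 {V : Type*} [Fintype V] [DecidableEq V] (G : LoopGraph V)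
    (hG : G.StronglyC4Free)
    (hconn : ∀ u v : V, Relation.ReflTransGen G.Adj u v)
    (h2 : 2 ≤ Fintype.card V)
    (hdeg : ∀ v : V, G.deg v ≠ 0) :
    G.gap = Finset.univ.sup (fun v : V => (G.induce ({v}ᶜ : Finset V)).gap - 1) := by
  classical
  apply le_antisymm
  · -- hard direction: gap G ≤ sup
    rcases Nat.eq_zero_or_pos G.gap with h0 | h1
    · rw [h0]; exact Nat.zero_le _
    have hstp_lt : G.stp < Fintype.card V := by
      have hg : G.gap = Fintype.card V - G.stp := rfl
      omega
    obtain ⟨C, hC, hcard⟩ := stp_spec G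
    -- normalize the cover so that all first components are singletons
    set f0 : Finset V × Finset V → Finset V × Finset V :=
      fun p => if p.1.card = 1 then p else (p.2, p.1) with hf0
    have hf0comp : ∀ p : Finset V × Finset V,
        ((f0 p).1 = p.1 ∧ (f0 p).2 = p.2) ∨ ((f0 p).1 = p.2 ∧ (f0 p).2 = p.1) := by
      intro p
      simp only [hf0]
      split
      · exact Or.inl ⟨rfl, rfl⟩
      · exact Or.inr ⟨rfl, rfl⟩
    have hcovP : ∀ (p : Finset V × Finset V) (u v : V),
        ((u ∈ (f0 p).1 ∧ v ∈ (f0 p).2) ∨ (u ∈ (f0 p).2 ∧ v ∈ (f0 p).1)) ↔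
        ((u ∈ p.1 ∧ v ∈ p.2) ∨ (u ∈ p.2 ∧ v ∈ p.1)) := by
      intro p u v
      rcases hf0comp p with ⟨e1, e2⟩ | ⟨e1, e2⟩ <;> rw [e1, e2] <;> tauto
    set C' : Finset (Finset V × Finset V) := C.image f0 with hC'def
    have hcov' : G.IsCover C' := by
      constructor
      · intro p hp
        simp only [hC'def, Finset.mem_image] at hp
        obtain ⟨q, hq, rfl⟩ := hp
        obtain ⟨hq1, hq2⟩ := hC.1 q hq
        rcases hf0comp q with ⟨e1, e2⟩ | ⟨e1, e2⟩ <;> rw [e1, e2]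
        · exact ⟨hq1, hq2⟩
        · exact ⟨hq2, hq1⟩
      · intro u v
        rw [hC.2 u v]
        constructor
        · rintro ⟨p, hp, hcase⟩
          exact ⟨f0 p, Finset.mem_image_of_mem _ hp, (hcovP p u v).2 hcase⟩
        · rintro ⟨p, hp, hcase⟩
          simp only [hC'def, Finset.mem_image] at hp
          obtain ⟨q, hq, rfl⟩ := hp
          exact ⟨q, hq, (hcovP q u v).1 hcase⟩
    have hsing : ∀ p ∈ C', ∃ d, p.1 = {d} := by
      intro p hp
      simp only [hC'def, Finset.mem_image] at hp
      obtain ⟨q, hq, rfl⟩ := hp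
      obtain ⟨hq1, hq2⟩ := hC.1 q hq
      by_cases hc1 : q.1.card = 1
      · have : (f0 q).1 = q.1 := by simp only [hf0, if_pos hc1]
        rw [this]
        exact Finset.card_eq_one.1 hc1
      · have hq2c : q.2.card = 1 := by
          by_contra hc2
          have h1' : 2 ≤ q.1.card := by
            have := Finset.card_pos.2 hq1; omega
          have h2' : 2 ≤ q.2.card := by
            have := Finset.card_pos.2 hq2; omega
          obtain ⟨a, ha, b, hb, hab⟩ := Finset.one_lt_card.1 h1'
          obtain ⟨x, hx, y, hy, hxy⟩ := Finset.one_lt_card.1 h2'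
          exact hG ⟨a, b, x, y, hab, hxy, cover_adj hC hq ha hx, cover_adj hC hq ha hy,
            cover_adj hC hq hb hx, cover_adj hC hq hb hy⟩
        have : (f0 q).1 = q.2 := by simp only [hf0, if_neg hc1]
        rw [this]
        exact Finset.card_eq_one.1 hq2c
    have hcompsub : sjComponents C' ⊆ sjComponents C := by
      intro X hX
      rw [mem_sjComponents] at hX ⊢
      obtain ⟨p, hp, hcase⟩ := hX
      simp only [hC'def, Finset.mem_image] at hp
      obtain ⟨q, hq, rfl⟩ := hp
      refine ⟨q, hq, ?_⟩
      rcases hf0comp q with ⟨e1, e2⟩ | ⟨e1, e2⟩ <;> rw [e1, e2] at hcase <;> tauto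
    set k' := (sjComponents C').card with hk'
    have hk'le : k' ≤ G.stp := hcard ▸ Finset.card_le_card hcompsub
    have hmem : ∀ v : V, ∃ X ∈ sjComponents C', v ∈ X := by
      intro v
      obtain ⟨w, hw⟩ := exists_adj_of_deg (hdeg v)
      obtain ⟨p, hp, hcase⟩ := (hcov'.2 v w).1 hw
      rcases hcase with ⟨hm, -⟩ | ⟨hm, -⟩
      · exact ⟨p.1, mem_sjComponents.2 ⟨p, hp, Or.inl rfl⟩, hm⟩
      · exact ⟨p.2, mem_sjComponents.2 ⟨p, hp, Or.inr rfl⟩, hm⟩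
    have hbig : ∃ X ∈ sjComponents C', 2 ≤ X.card := by
      by_contra hb
      push_neg at hb
      have hsub : Finset.univ.image (fun v : V => ({v} : Finset V)) ⊆ sjComponents C' := by
        intro Y hY
        simp only [Finset.mem_image] at hY
        obtain ⟨v, -, rfl⟩ := hY
        obtain ⟨X, hX, hvX⟩ := hmem v
        have hle1 : X.card ≤ 1 := by have := hb X hX; omega
        have hge1 : 1 ≤ X.card := Finset.card_pos.2 ⟨v, hvX⟩
        obtain ⟨a, rfl⟩ := Finset.card_eq_one.1 (le_antisymm hle1 hge1)
        rw [Finset.mem_singleton] at hvX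
        subst hvX
        exact hX
      have hcontra : Fintype.card V ≤ k' := by
        calc Fintype.card V
            = (Finset.univ.image (fun v : V => ({v} : Finset V))).card := by
              rw [Finset.card_image_of_injective _ Finset.singleton_injective,
                Finset.card_univ]
          _ ≤ k' := Finset.card_le_card hsub
      omega
    obtain ⟨X, hXmem, hXcard⟩ := hbig
    have hXsnd : ∃ p ∈ C', p.2 = X := by
      rw [mem_sjComponents] at hXmem
      obtain ⟨p, hp, hcase⟩ := hXmem
      rcases hcase with h | h
      · obtain ⟨d, hd⟩ := hsing p hp
        rw [← h, hd, Finset.card_singleton] at hXcard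
        omega
      · exact ⟨p, hp, h⟩
    obtain ⟨p0, hp0, hp02⟩ := hXsnd
    obtain ⟨c, hc⟩ := hsing p0 hp0
    have hcadj : ∀ x ∈ X, G.Adj c x := fun x hx =>
      cover_adj hcov' hp0 (hc ▸ Finset.mem_singleton_self c) (hp02 ▸ hx)
    have hcx : ({c} : Finset V) ≠ X := by
      intro h
      rw [← h, Finset.card_singleton] at hXcard
      omega
    have hcmem : ({c} : Finset V) ∈ sjComponents C' :=
      mem_sjComponents.2 ⟨p0, hp0, Or.inl hc⟩
    -- build a cover of G with vertex c removed
    set s : Finset V := ({c}ᶜ : Finset V) with hs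
    set fdown : Finset V → Finset {x // x ∈ s} := fun Y => Y.subtype (· ∈ s) with hfdown
    have hmem_fdown : ∀ (Y : Finset V) (a : {x // x ∈ s}), a ∈ fdown Y ↔ (a : V) ∈ Y := by
      intro Y a; simp [hfdown, Finset.mem_subtype]
    have hmem_s : ∀ x : V, x ∈ s ↔ x ≠ c := by
      intro x; simp [hs]
    set D := (C'.filter (fun p => p.1 ≠ {c} ∧ ¬ p.2 ⊆ {c})).image
      (fun p => (fdown p.1, fdown p.2)) with hD
    have hDcov : (G.induce s).IsCover D := by
      constructor
      · intro q hq
        simp only [hD, Finset.mem_image, Finset.mem_filter] at hq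
        obtain ⟨p, ⟨hp, hp1, hp2⟩, rfl⟩ := hq
        obtain ⟨d, hd⟩ := hsing p hp
        have hdc : d ≠ c := by rintro rfl; exact hp1 hd
        constructor
        · exact ⟨⟨d, (hmem_s d).2 hdc⟩, (hmem_fdown _ _).2 (by rw [hd]; exact Finset.mem_singleton_self d)⟩
        · obtain ⟨x, hx, hxc⟩ := Finset.not_subset.1 hp2
          rw [Finset.mem_singleton] at hxc
          exact ⟨⟨x, (hmem_s x).2 hxc⟩, (hmem_fdown _ _).2 hx⟩
      · intro a b
        constructor
        · intro hab
          have hab' : G.Adj a.1 b.1 := hab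
          obtain ⟨p, hp, hcase⟩ := (hcov'.2 a.1 b.1).1 hab'
          have hac : (a : V) ≠ c := (hmem_s _).1 a.2
          have hbc : (b : V) ≠ c := (hmem_s _).1 b.2
          rcases hcase with ⟨hm1, hm2⟩ | ⟨hm1, hm2⟩
          · have hp1 : p.1 ≠ {c} := by
              intro h; rw [h, Finset.mem_singleton] at hm1; exact hac hm1
            have hp2 : ¬ p.2 ⊆ {c} := by
              intro h; have := h hm2; rw [Finset.mem_singleton] at this; exact hbc this
            refine ⟨(fdown p.1, fdown p.2), ?_,
              Or.inl ⟨(hmem_fdown _ _).2 hm1, (hmem_fdown _ _).2 hm2⟩⟩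
            exact Finset.mem_image_of_mem _ (Finset.mem_filter.2 ⟨hp, hp1, hp2⟩)
          · have hp1 : p.1 ≠ {c} := by
              intro h; rw [h, Finset.mem_singleton] at hm2; exact hbc hm2
            have hp2 : ¬ p.2 ⊆ {c} := by
              intro h; have := h hm1; rw [Finset.mem_singleton] at this; exact hac this
            refine ⟨(fdown p.1, fdown p.2), ?_,
              Or.inr ⟨(hmem_fdown _ _).2 hm1, (hmem_fdown _ _).2 hm2⟩⟩
            exact Finset.mem_image_of_mem _ (Finset.mem_filter.2 ⟨hp, hp1, hp2⟩)
        · rintro ⟨q, hq, hcase⟩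
          simp only [hD, Finset.mem_image, Finset.mem_filter] at hq
          obtain ⟨p, ⟨hp, -, -⟩, rfl⟩ := hq
          show G.Adj a.1 b.1
          rcases hcase with ⟨hm1, hm2⟩ | ⟨hm1, hm2⟩
          · exact (hcov'.2 a.1 b.1).2
              ⟨p, hp, Or.inl ⟨(hmem_fdown _ _).1 hm1, (hmem_fdown _ _).1 hm2⟩⟩
          · exact (hcov'.2 a.1 b.1).2
              ⟨p, hp, Or.inr ⟨(hmem_fdown _ _).1 hm1, (hmem_fdown _ _).1 hm2⟩⟩
    have hDcomp : sjComponents D ⊆ (sjComponents C' \ {({c} : Finset V), X}).image fdown := by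
      intro Y hY
      rw [mem_sjComponents] at hY
      obtain ⟨q, hq, hcase⟩ := hY
      simp only [hD, Finset.mem_image, Finset.mem_filter] at hq
      obtain ⟨p, ⟨hp, hp1, hp2⟩, rfl⟩ := hq
      rcases hcase with h | h
      · refine Finset.mem_image.2 ⟨p.1, ?_, h⟩
        rw [Finset.mem_sdiff]
        refine ⟨mem_sjComponents.2 ⟨p, hp, Or.inl rfl⟩, ?_⟩
        simp only [Finset.mem_insert, Finset.mem_singleton]
        push_neg
        refine ⟨hp1, ?_⟩
        intro hpx
        obtain ⟨d, hd⟩ := hsing p hp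
        rw [← hpx, hd, Finset.card_singleton] at hXcard
        omega
      · refine Finset.mem_image.2 ⟨p.2, ?_, h⟩
        rw [Finset.mem_sdiff]
        refine ⟨mem_sjComponents.2 ⟨p, hp, Or.inr rfl⟩, ?_⟩
        simp only [Finset.mem_insert, Finset.mem_singleton]
        push_neg
        constructor
        · intro h2
          exact hp2 (by rw [h2])
        · intro h2
          obtain ⟨d, hd⟩ := hsing p hp
          have hdc : d ≠ c := by rintro rfl; exact hp1 hd
          have hdadj : ∀ x ∈ X, G.Adj d x := fun x hx =>
            cover_adj hcov' hp (by rw [hd]; exact Finset.mem_singleton_self d) (h2 ▸ hx)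
          obtain ⟨x, hx, y, hy, hxy⟩ := Finset.one_lt_card.1 hXcard
          exact hG ⟨c, d, x, y, hdc.symm.symm.symm, hxy, hcadj x hx, hcadj y hy,
            hdadj x hx, hdadj y hy⟩
    have hcX_sub : ({({c} : Finset V), X} : Finset (Finset V)) ⊆ sjComponents C' := by
      intro Y hY
      simp only [Finset.mem_insert, Finset.mem_singleton] at hY
      rcases hY with rfl | rfl
      · exact hcmem
      · exact hXmem
    have hpaircard : ({({c} : Finset V), X} : Finset (Finset V)).card = 2 :=
      Finset.card_pair hcx
    have hk'2 : 2 ≤ k' := by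
      calc 2 = ({({c} : Finset V), X} : Finset (Finset V)).card := hpaircard.symm
        _ ≤ k' := Finset.card_le_card hcX_sub
    have hstp_down : (G.induce s).stp ≤ k' - 2 := by
      have hb1 := stp_le (G.induce s) hDcov
      have hb2 : (sjComponents D).card ≤ (sjComponents C' \ {({c} : Finset V), X}).card :=
        le_trans (Finset.card_le_card hDcomp) Finset.card_image_le
      have hb3 : (sjComponents C' \ {({c} : Finset V), X}).card = k' - 2 := by
        rw [Finset.card_sdiff_of_subset hcX_sub, hpaircard]
      omega
    have hcards : Fintype.card {x // x ∈ s} = Fintype.card V - 1 := by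
      rw [Fintype.card_coe, hs, Finset.card_compl, Finset.card_singleton]
    have hfinal : G.gap ≤ (G.induce s).gap - 1 := by
      have hg1 : G.gap = Fintype.card V - G.stp := rfl
      have hg2 : (G.induce s).gap = Fintype.card {x // x ∈ s} - (G.induce s).stp := rfl
      omega
    exact le_trans hfinal (Finset.le_sup (f := fun v : V => (G.induce ({v}ᶜ : Finset V)).gap - 1) (Finset.mem_univ c))
  · -- easy direction: sup ≤ gap G
    refine Finset.sup_le fun v _ => ?_
    set s : Finset V := ({v}ᶜ : Finset V) with hs
    obtain ⟨D, hD, hDcard⟩ := stp_spec (G.induce s)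
    set up : Finset {x // x ∈ s} → Finset V := fun Y => Y.image Subtype.val with hup
    set Nv := Finset.univ.filter (fun w => G.Adj v w) with hNv
    have hNvmem : ∀ w, w ∈ Nv ↔ G.Adj v w := by intro w; simp [hNv]
    have hNvne : Nv.Nonempty := by
      obtain ⟨w, hw⟩ := exists_adj_of_deg (hdeg v)
      exact ⟨w, (hNvmem w).2 hw⟩
    have hmem_up : ∀ (Y : Finset {x // x ∈ s}) (x : V),
        x ∈ up Y ↔ ∃ h : x ∈ s, (⟨x, h⟩ : {x // x ∈ s}) ∈ Y := by
      intro Y x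
      simp only [hup, Finset.mem_image]
      constructor
      · rintro ⟨a, ha, rfl⟩; exact ⟨a.2, ha⟩
      · rintro ⟨h, ha⟩; exact ⟨⟨x, h⟩, ha, rfl⟩
    have hmem_s : ∀ x : V, x ∈ s ↔ x ≠ v := by intro x; simp [hs]
    set E := D.image (fun p => (up p.1, up p.2)) ∪ {(({v} : Finset V), Nv)} with hE
    have hEcov : G.IsCover E := by
      constructor
      · intro q hq
        rw [hE, Finset.mem_union] at hq
        rcases hq with hq | hq
        · simp only [Finset.mem_image] at hq
          obtain ⟨p, hp, rfl⟩ := hq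
          obtain ⟨hn1, hn2⟩ := hD.1 p hp
          exact ⟨hn1.image _, hn2.image _⟩
        · rw [Finset.mem_singleton] at hq
          subst hq
          exact ⟨⟨v, Finset.mem_singleton_self v⟩, hNvne⟩
      · intro u w
        constructor
        · intro huw
          by_cases huv : u = v
          · refine ⟨(({v} : Finset V), Nv),
              Finset.mem_union_right _ (Finset.mem_singleton_self _),
              Or.inl ⟨Finset.mem_singleton.2 huv, (hNvmem w).2 ?_⟩⟩
            rw [← huv]; exact huw
          · by_cases hwv : w = v
            · refine ⟨(({v} : Finset V), Nv),
                Finset.mem_union_right _ (Finset.mem_singleton_self _),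
                Or.inr ⟨(hNvmem u).2 ?_, Finset.mem_singleton.2 hwv⟩⟩
              exact G.symm _ _ (by rw [← hwv]; exact huw)
            · have ha : u ∈ s := (hmem_s u).2 huv
              have hb : w ∈ s := (hmem_s w).2 hwv
              have hab : (G.induce s).Adj ⟨u, ha⟩ ⟨w, hb⟩ := huw
              obtain ⟨p, hp, hcase⟩ := (hD.2 _ _).1 hab
              refine ⟨(up p.1, up p.2),
                Finset.mem_union_left _ (Finset.mem_image_of_mem _ hp), ?_⟩
              rcases hcase with ⟨hm1, hm2⟩ | ⟨hm1, hm2⟩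
              · exact Or.inl ⟨(hmem_up _ _).2 ⟨ha, hm1⟩, (hmem_up _ _).2 ⟨hb, hm2⟩⟩
              · exact Or.inr ⟨(hmem_up _ _).2 ⟨ha, hm1⟩, (hmem_up _ _).2 ⟨hb, hm2⟩⟩
        · rintro ⟨q, hq, hcase⟩
          rw [hE, Finset.mem_union] at hq
          rcases hq with hq | hq
          · simp only [Finset.mem_image] at hq
            obtain ⟨p, hp, rfl⟩ := hq
            rcases hcase with ⟨hm1, hm2⟩ | ⟨hm1, hm2⟩
            · obtain ⟨ha, hm1'⟩ := (hmem_up _ _).1 hm1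
              obtain ⟨hb, hm2'⟩ := (hmem_up _ _).1 hm2
              exact (hD.2 ⟨u, ha⟩ ⟨w, hb⟩).2 ⟨p, hp, Or.inl ⟨hm1', hm2'⟩⟩
            · obtain ⟨ha, hm1'⟩ := (hmem_up _ _).1 hm1
              obtain ⟨hb, hm2'⟩ := (hmem_up _ _).1 hm2
              exact (hD.2 ⟨u, ha⟩ ⟨w, hb⟩).2 ⟨p, hp, Or.inr ⟨hm1', hm2'⟩⟩
          · rw [Finset.mem_singleton] at hq
            subst hq
            rcases hcase with ⟨hm1, hm2⟩ | ⟨hm1, hm2⟩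
            · rw [Finset.mem_singleton] at hm1
              subst hm1
              exact (hNvmem w).1 hm2
            · rw [Finset.mem_singleton] at hm2
              subst hm2
              exact G.symm _ _ ((hNvmem u).1 hm1)
    have hEcomp : sjComponents E ⊆
        (sjComponents D).image up ∪ {({v} : Finset V), Nv} := by
      intro Y hY
      rw [mem_sjComponents] at hY
      obtain ⟨q, hq, hcase⟩ := hY
      rw [hE, Finset.mem_union] at hq
      rcases hq with hq | hq
      · simp only [Finset.mem_image] at hq
        obtain ⟨p, hp, rfl⟩ := hq
        apply Finset.mem_union_left
        rcases hcase with h | h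
        · exact Finset.mem_image.2 ⟨p.1, mem_sjComponents.2 ⟨p, hp, Or.inl rfl⟩, h⟩
        · exact Finset.mem_image.2 ⟨p.2, mem_sjComponents.2 ⟨p, hp, Or.inr rfl⟩, h⟩
      · rw [Finset.mem_singleton] at hq
        subst hq
        apply Finset.mem_union_right
        rcases hcase with h | h <;> rw [← h] <;> simp
    have hstp_up : G.stp ≤ (G.induce s).stp + 2 := by
      have hb1 := stp_le G hEcov
      have hb2 := Finset.card_le_card hEcomp
      have hb3 : ((sjComponents D).image up ∪ {({v} : Finset V), Nv}).card ≤
          (G.induce s).stp + 2 := by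
        calc ((sjComponents D).image up ∪ {({v} : Finset V), Nv}).card
            ≤ ((sjComponents D).image up).card + ({({v} : Finset V), Nv} : Finset (Finset V)).card :=
              Finset.card_union_le _ _
          _ ≤ (sjComponents D).card + 2 := by
              refine add_le_add Finset.card_image_le ?_
              exact le_trans (Finset.card_insert_le _ _) (by rw [Finset.card_singleton])
          _ = (G.induce s).stp + 2 := by rw [hDcard]
      omega
    have hcards : Fintype.card {x // x ∈ s} = Fintype.card V - 1 := by
      rw [Fintype.card_coe, hs, Finset.card_compl, Finset.card_singleton]
    have hg1 : G.gap = Fintype.card V - G.stp := rfl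
    have hg2 : (G.induce s).gap = Fintype.card {x // x ∈ s} - (G.induce s).stp := rfl
    omega
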